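/- Let π be a finitely generated subgroup of GL(n, C). Then π contains a torsion-free normal subgroup of finite index (Selberg's lemma). Consequently, if π is a cocompact Fuchsian group acting on the upper half plane H, there is a finite-index normal subgroup π₀ acting freely on H, so that Y = H/π₀ is a compact Riemann surface with H/π = Y/Γ for Γ = π/π₀. -/

import Mathlib

open UpperHalfPlane

section aux

theorem myJacInt : IsJacobsonRing ℤ := by
  rw [isJacobsonRing_iff_prime_eq]
  intro P hP
  rcases eq_or_ne P ⊥ with rfl | hne
  · refine le_antisymm ?_ Ideal.le_jacobson
    intro x hx
    rw [Ideal.jacobson, Ideal.mem_sInf] at hx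
    simp only [Submodule.mem_bot]
    by_contra hx0
    obtain ⟨p, hple, hp⟩ := Nat.exists_infinite_primes (x.natAbs + 2)
    have hmax : (Ideal.span {(p : ℤ)}).IsMaximal := by
      apply PrincipalIdealRing.isMaximal_of_irreducible
      exact (Int.prime_iff_natAbs_prime.mpr (by simpa using hp)).irreducible
    have := hx ⟨bot_le, hmax⟩
    rw [Ideal.mem_span_singleton] at this
    have : (p:ℤ).natAbs ∣ x.natAbs := Int.natAbs_dvd_natAbs.mpr this
    simp only [Int.natAbs_natCast] at this
    have := Nat.le_of_dvd (by omega) this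
    omega
  · have : P.IsMaximal := hP.isMaximal hne
    exact Ideal.jacobson_eq_self_of_isMaximal

attribute [local instance] myJacInt in
theorem myFiniteResidue {R : Type*} [CommRing R] (hft : Algebra.FiniteType ℤ R)
    (m : Ideal R) [m.IsMaximal] : Finite (R ⧸ m) := by
  haveI hft' : Algebra.FiniteType ℤ (R ⧸ m) :=
    (by haveI := hft; exact Algebra.FiniteType.of_surjective (Ideal.Quotient.mkₐ ℤ m)
                                Ideal.Quotient.mk_surjective)
  letI : Field (R ⧸ m) := Ideal.Quotient.field m
  have hMF : Module.Finite ℤ (R ⧸ m) := finite_of_finite_type_of_isJacobsonRing ℤ (R ⧸ m)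
  obtain ⟨p, hchar⟩ := CharP.exists (R ⧸ m)
  rcases CharP.char_is_prime_or_zero (R ⧸ m) p with hp | rfl
  · haveI : Fact p.Prime := ⟨hp⟩
    haveI : Algebra (ZMod p) (R ⧸ m) := ZMod.algebra (R ⧸ m) p
    haveI : Module.Finite (ZMod p) (R ⧸ m) :=
      Module.Finite.of_restrictScalars_finite ℤ (ZMod p) (R ⧸ m)
    exact Module.finite_of_finite (ZMod p)
  · haveI : CharZero (R ⧸ m) := CharP.charP_to_charZero (R ⧸ m)
    exfalso
    have hint : IsIntegral ℤ (algebraMap ℚ (R ⧸ m) (1/2)) := IsIntegral.of_finite ℤ _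
    have h2 : IsIntegral ℤ ((1:ℚ)/2) :=
      IsIntegral.tower_bot (algebraMap ℚ (R ⧸ m)).injective hint
    obtain ⟨y, hy⟩ := IsIntegrallyClosed.isIntegral_iff.mp h2
    have : ((2 * y : ℤ) : ℚ) = 1 := by
      push_cast
      rw [show ((y:ℚ)) = 1/2 from hy]
      ring
    have : (2 * y : ℤ) = 1 := by exact_mod_cast this
    omega

theorem myKey {k : ℕ} {R F : Type*} [CommRing R] [CommRing F] [IsDomain F]
    (inc : R →+* ℂ) (hinc : Function.Injective inc) (ψ : R →+* F)
    (M : Matrix (Fin k) (Fin k) R) {n : ℕ}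
    (hpow : (inc.mapMatrix M) ^ n = 1) (hred : ψ.mapMatrix M = 1)
    (hchar : (n : F) ≠ 0) :
    inc.mapMatrix M = 1 := by
  set X := inc.mapMatrix M with hX
  set G := ∑ i ∈ Finset.range n, M ^ i with hG
  have hGF : ψ.mapMatrix G = (n : F) • (1 : Matrix (Fin k) (Fin k) F) := by
    rw [hG, map_sum]
    simp only [map_pow, hred, one_pow]
    simp [Finset.sum_const, Nat.cast_smul_eq_nsmul]
  have hdet : ψ G.det ≠ 0 := by
    rw [RingHom.map_det, hGF, Matrix.det_smul, Matrix.det_one, mul_one]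
    exact pow_ne_zero _ hchar
  have hGdet : G.det ≠ 0 := fun h => hdet (by rw [h, map_zero])
  have hdetC : (inc.mapMatrix G).det ≠ 0 := by
    rw [← RingHom.map_det]
    intro h
    exact hGdet (hinc (by rw [h, map_zero]))
  have hunit : IsUnit (inc.mapMatrix G) :=
    (Matrix.isUnit_iff_isUnit_det _).mpr (isUnit_iff_ne_zero.mpr hdetC)
  have hmapG : inc.mapMatrix G = ∑ i ∈ Finset.range n, X ^ i := by
    rw [hG, map_sum]; simp only [map_pow]; rfl
  have hgeom : (inc.mapMatrix G) * (X - 1) = 0 := by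
    rw [hmapG, geom_sum_mul, hpow, sub_self]
  exact sub_eq_zero.mp ((hunit.mul_right_eq_zero).mp hgeom)

attribute [local instance] myJacInt in
theorem myMain {k : ℕ} {R : Type*} [CommRing R] [IsDomain R] [CharZero R]
    (hft : Algebra.FiniteType ℤ R) (inc : R →+* ℂ) (hinc : Function.Injective inc)
    {G : Type*} [Group G] (E : G →* Matrix (Fin k) (Fin k) R)
    (hEinj : ∀ g : G, inc.mapMatrix (E g) = 1 → g = 1)
    (hEpow : ∀ (g : G) (n : ℕ), g ^ n = 1 → (inc.mapMatrix (E g)) ^ n = 1) :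
    ∃ N : Subgroup G, N.Normal ∧ N.FiniteIndex ∧
      ∀ x : G, x ∈ N → IsOfFinOrder x → x = 1 := by
  haveI : IsJacobsonRing R := isJacobsonRing_of_finiteType (A := ℤ)
  -- first maximal ideal
  obtain ⟨m₁, hm₁⟩ := Ideal.exists_maximal R
  haveI hm₁' := hm₁
  haveI : Finite (R ⧸ m₁) := myFiniteResidue hft m₁
  set p : ℕ := ringChar (R ⧸ m₁) with hpdef
  have hp : p.Prime := CharP.char_is_prime (R ⧸ m₁) p
  -- second maximal ideal avoiding p
  have hpA : ((p : R)) ≠ 0 := Nat.cast_ne_zero.mpr hp.ne_zero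
  obtain ⟨m₂, hm₂, hpm₂⟩ : ∃ m₂ : Ideal R, m₂.IsMaximal ∧ (p : R) ∉ m₂ := by
    by_contra hcon
    push_neg at hcon
    have hjac : (⊥ : Ideal R).jacobson = ⊥ :=
      (‹IsJacobsonRing R›.out (Ideal.bot_prime.isRadical))
    have : (p : R) ∈ (⊥ : Ideal R).jacobson := by
      rw [Ideal.jacobson, Ideal.mem_sInf]
      rintro I ⟨-, hImax⟩
      exact hcon I hImax
    rw [hjac] at this
    exact hpA (by simpa using this)
  haveI hm₂' := hm₂
  haveI : Finite (R ⧸ m₂) := myFiniteResidue hft m₂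
  set ψ₁ : R →+* R ⧸ m₁ := Ideal.Quotient.mk m₁ with hψ₁
  set ψ₂ : R →+* R ⧸ m₂ := Ideal.Quotient.mk m₂ with hψ₂
  set ρ₁ : G →* Matrix (Fin k) (Fin k) (R ⧸ m₁) :=
    (ψ₁.mapMatrix.toMonoidHom).comp E with hρ₁
  set ρ₂ : G →* Matrix (Fin k) (Fin k) (R ⧸ m₂) :=
    (ψ₂.mapMatrix.toMonoidHom).comp E with hρ₂
  set f : G →* (Matrix (Fin k) (Fin k) (R ⧸ m₁))ˣ × (Matrix (Fin k) (Fin k) (R ⧸ m₂))ˣ :=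
    (ρ₁.toHomUnits).prod (ρ₂.toHomUnits) with hf
  refine ⟨f.ker, MonoidHom.normal_ker f, ?_, ?_⟩
  · haveI : Finite (G ⧸ f.ker) :=
      Finite.of_equiv _ (QuotientGroup.quotientKerEquivRange f).symm.toEquiv
    exact Subgroup.finiteIndex_of_finite_quotient
  · -- torsion-freeness
    intro x hxN hxfin
    have hmem : ∀ y : G, y ∈ f.ker → (ρ₁ y = 1 ∧ ρ₂ y = 1) := by
      intro y hy
      have hy1 : f y = 1 := hy
      rw [hf, MonoidHom.prod_apply, Prod.ext_iff] at hy1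
      obtain ⟨h1, h2⟩ := hy1
      constructor
      · simpa using congrArg Units.val h1
      · simpa using congrArg Units.val h2
    have key : ∀ (y : G) (q : ℕ), q ≠ 0 → y ∈ f.ker → y ^ q = 1 →
        ∀ (m : Ideal R) (_ : m.IsMaximal) (_ : (Ideal.Quotient.mk m).mapMatrix (E y) = 1)
          (_ : ((q : R ⧸ m)) ≠ 0), y = 1 := by
      intro y q hq0 hy hyq m hm hred hq
      haveI := hm
      have hpow : (inc.mapMatrix (E y)) ^ q = 1 := hEpow y q hyq
      exact hEinj y (myKey inc hinc (Ideal.Quotient.mk m) (E y) hpow hred hq)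
    -- main argument
    set n : ℕ := orderOf x with hn
    have hn0 : n ≠ 0 := hxfin.orderOf_pos.ne'
    set a : ℕ := n.factorization p with ha
    set n' : ℕ := n / p ^ a with hn'
    have hqn : p ^ a * n' = n := Nat.ordProj_mul_ordCompl_eq_self n p
    -- the element x ^ n' is killed by the second congruence
    have hy1 : x ^ n' = 1 := by
      refine key (x ^ n') (p ^ a) (pow_ne_zero a hp.ne_zero) (pow_mem hxN n') ?_ m₂ hm₂ ?_ ?_
      · have h1 : (x ^ n') ^ p ^ a = x ^ n := by
          rw [← pow_mul, Nat.mul_comm, hqn]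
        rw [h1, hn]
        exact pow_orderOf_eq_one x
      · have h2 : ρ₂ (x ^ n') = 1 := by
          rw [map_pow, (hmem x hxN).2, one_pow]
        exact h2
      · have h3 : ((p : R) : R ⧸ m₂) ≠ 0 := by
          rw [Ne, Ideal.Quotient.eq_zero_iff_mem]
          exact hpm₂
        rw [map_natCast] at h3
        rw [Nat.cast_pow]
        exact pow_ne_zero _ h3
    have hdvd : n ∣ n' := hn ▸ orderOf_dvd_of_pow_eq_one hy1
    have hpn : ¬ p ∣ n := by
      intro hpd
      exact Nat.not_dvd_ordCompl hp hn0 (hpd.trans hdvd)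
    have hnF : ((n : R ⧸ m₁)) ≠ 0 := by
      intro h
      exact hpn ((ringChar.spec _ n).mp h)
    refine key x n hn0 hxN (by rw [hn]; exact pow_orderOf_eq_one x) m₁ hm₁ ?_ hnF
    have h4 : ρ₁ x = 1 := (hmem x hxN).1
    exact h4

set_option maxHeartbeats 1000000 in
theorem mySelberg (k : ℕ) (Γ : Subgroup (Matrix.GeneralLinearGroup (Fin k) ℂ))
    (hFG : Group.FG ↥Γ) :
    ∃ N : Subgroup ↥Γ, N.Normal ∧ N.FiniteIndex ∧
      ∀ x : ↥Γ, x ∈ N → IsOfFinOrder x → x = 1 := by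
  classical
  obtain ⟨S, hScl, hSfin⟩ := (Subgroup.fg_iff _).mp (Group.fg_def.mp hFG)
  -- the set of entries of generators and their inverses
  set ent : Matrix.GeneralLinearGroup (Fin k) ℂ → Set ℂ := fun g =>
    (Set.range fun p : Fin k × Fin k => (g : Matrix (Fin k) (Fin k) ℂ) p.1 p.2) ∪
    (Set.range fun p : Fin k × Fin k => ((g⁻¹ : Matrix.GeneralLinearGroup (Fin k) ℂ) :
      Matrix (Fin k) (Fin k) ℂ) p.1 p.2) with hent
  set s : Set ℂ := ⋃ g ∈ (Γ.subtype '' S), ent g with hs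
  have hsfin : s.Finite :=
    (hSfin.image _).biUnion fun g _ => (Set.finite_range _).union (Set.finite_range _)
  obtain ⟨A, hAfg, hssubA⟩ : ∃ A : Subalgebra ℤ ℂ, Algebra.FiniteType ℤ ↥A ∧ s ⊆ A :=
    ⟨Algebra.adjoin ℤ s,
      (Subalgebra.fg_iff_finiteType _).mp (Subalgebra.fg_def.mpr ⟨s, hsfin, rfl⟩),
      Algebra.subset_adjoin⟩
  set inc : ↥A →+* ℂ := A.val.toRingHom with hincdef
  have hinc : Function.Injective inc := Subtype.coe_injective
  haveI : IsDomain ↥A := Function.Injective.isDomain inc hinc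
  haveI : CharZero ↥A := inc.charZero
  -- all entries of elements of Γ and their inverses lie in A
  have hΓH : ∀ g : ↥Γ,
      (∀ i j, ((g : Matrix.GeneralLinearGroup (Fin k) ℂ) :
        Matrix (Fin k) (Fin k) ℂ) i j ∈ A) ∧
      (∀ i j, (((g : Matrix.GeneralLinearGroup (Fin k) ℂ)⁻¹ :
        Matrix.GeneralLinearGroup (Fin k) ℂ) : Matrix (Fin k) (Fin k) ℂ) i j ∈ A) := by
    set H : Subgroup (Matrix.GeneralLinearGroup (Fin k) ℂ) :=
      { carrier := {g | (∀ i j, (g : Matrix (Fin k) (Fin k) ℂ) i j ∈ A) ∧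
          (∀ i j, ((g⁻¹ : Matrix.GeneralLinearGroup (Fin k) ℂ) :
            Matrix (Fin k) (Fin k) ℂ) i j ∈ A)}
        one_mem' := by
          constructor <;>
          · intro i j
            simp only [inv_one, Units.val_one, Matrix.one_apply]
            split_ifs
            exacts [one_mem A, zero_mem A]
        mul_mem' := by
          rintro a b ⟨ha1, ha2⟩ ⟨hb1, hb2⟩
          constructor
          · intro i j
            rw [Units.val_mul, Matrix.mul_apply]
            exact Subalgebra.sum_mem A fun l _ => mul_mem (ha1 i l) (hb1 l j)
          · intro i j
            rw [mul_inv_rev, Units.val_mul, Matrix.mul_apply]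
            exact Subalgebra.sum_mem A fun l _ => mul_mem (hb2 i l) (ha2 l j)
        inv_mem' := by
          rintro a ⟨h1, h2⟩
          exact ⟨h2, by rw [inv_inv]; exact h1⟩ } with hH
    have hle : Subgroup.closure (Γ.subtype '' S) ≤ H := by
      rw [Subgroup.closure_le]
      rintro x ⟨g, hgS, rfl⟩
      constructor
      · intro i j
        apply hssubA
        exact Set.mem_biUnion ⟨g, hgS, rfl⟩ (Or.inl ⟨(i, j), rfl⟩)
      · intro i j
        apply hssubA
        exact Set.mem_biUnion ⟨g, hgS, rfl⟩ (Or.inr ⟨(i, j), rfl⟩)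
    intro g
    have hg : (g : Matrix.GeneralLinearGroup (Fin k) ℂ) ∈
        Subgroup.map Γ.subtype (Subgroup.closure S) := by
      rw [hScl]
      exact ⟨g, trivial, rfl⟩
    rw [MonoidHom.map_closure] at hg
    exact hle hg
  -- the matrix over A attached to an element of Γ
  set E0 : ↥Γ → Matrix (Fin k) (Fin k) ↥A := fun g =>
    Matrix.of fun i j => (⟨_, (hΓH g).1 i j⟩ : ↥A) with hE0
  have hmapinc : ∀ g : ↥Γ, inc.mapMatrix (E0 g) =
      ((g : Matrix.GeneralLinearGroup (Fin k) ℂ) : Matrix (Fin k) (Fin k) ℂ) := by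
    intro g; ext i j; rfl
  have hinj : Function.Injective
      (inc.mapMatrix : Matrix (Fin k) (Fin k) ↥A →+* Matrix (Fin k) (Fin k) ℂ) := by
    intro M N h
    ext i j
    exact congrFun (congrFun (congrArg (fun (X : Matrix (Fin k) (Fin k) ℂ) => X) h) i) j
  set E : ↥Γ →* Matrix (Fin k) (Fin k) ↥A :=
    { toFun := E0
      map_one' := by
        apply hinj
        rw [hmapinc, map_one]
        rfl
      map_mul' := by
        intro g h
        apply hinj
        rw [hmapinc, map_mul, hmapinc, hmapinc]
        push_cast
        rfl } with hE
  have hEapp : ∀ g : ↥Γ, E g = E0 g := fun _ => rfl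
  refine myMain hAfg inc hinc E ?_ ?_
  · intro g hg
    rw [hEapp, hmapinc] at hg
    have hgGL : (g : Matrix.GeneralLinearGroup (Fin k) ℂ) = 1 := Units.ext hg
    exact OneMemClass.coe_eq_one.mp hgGL
  · intro g q hgq
    rw [hEapp, hmapinc]
    have h1 : ((g : Matrix.GeneralLinearGroup (Fin k) ℂ)) ^ q = 1 := by
      simpa using congrArg (fun t : ↥Γ => (t : Matrix.GeneralLinearGroup (Fin k) ℂ)) hgq
    simpa using congrArg Units.val h1

end aux

theorem stmt17 :
    (∀ (k : ℕ) (Γ : Subgroup (Matrix.GeneralLinearGroup (Fin k) ℂ)), Group.FG ↥Γ →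
      ∃ N : Subgroup ↥Γ, N.Normal ∧ N.FiniteIndex ∧
        ∀ x : ↥Γ, x ∈ N → IsOfFinOrder x → x = 1) ∧
    (∀ π : Subgroup (Matrix.SpecialLinearGroup (Fin 2) ℝ), Group.FG ↥π →
      (∀ x : ↥π, (∃ z : ℍ, (x : Matrix.SpecialLinearGroup (Fin 2) ℝ) • z = z) →
        IsOfFinOrder x) →
      ∃ π₀ : Subgroup ↥π, π₀.Normal ∧ π₀.FiniteIndex ∧
        ∀ x : ↥π, x ∈ π₀ → x ≠ 1 →
          ∀ z : ℍ, (x : Matrix.SpecialLinearGroup (Fin 2) ℝ) • z ≠ z) := by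
  constructor
  · exact mySelberg
  · intro π hFG hellip
    -- embed SL(2, ℝ) into GL(2, ℂ)
    set ι : Matrix.SpecialLinearGroup (Fin 2) ℝ →* Matrix.GeneralLinearGroup (Fin 2) ℂ :=
      Matrix.SpecialLinearGroup.toGL.comp
        (Matrix.SpecialLinearGroup.map (algebraMap ℝ ℂ)) with hι
    have hιinj : Function.Injective ι := by
      intro g h hgh
      have h1 : (Matrix.SpecialLinearGroup.map (n := Fin 2) (algebraMap ℝ ℂ) g) =
          (Matrix.SpecialLinearGroup.map (algebraMap ℝ ℂ) h) := by
        have := congrArg Units.val hgh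
        exact Subtype.coe_injective this
      apply Subtype.coe_injective
      ext i j
      have := congrArg (fun M : Matrix.SpecialLinearGroup (Fin 2) ℂ =>
        ((M : Matrix (Fin 2) (Fin 2) ℂ) i j)) h1
      simp only [Matrix.SpecialLinearGroup.map_apply_coe, RingHom.mapMatrix_apply,
        Matrix.map_apply] at this
      exact (algebraMap ℝ ℂ).injective this
    set Γ : Subgroup (Matrix.GeneralLinearGroup (Fin 2) ℂ) := Subgroup.map ι π with hΓ
    set e : ↥π ≃* ↥Γ := Subgroup.equivMapOfInjective π ι hιinj with he
    haveI : Group.FG ↥Γ := Group.fg_of_surjective (f := e.toMonoidHom) e.surjective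
    obtain ⟨N, hNnorm, hNfi, hNtf⟩ := mySelberg 2 Γ ‹_›
    refine ⟨N.comap e.toMonoidHom, Subgroup.Normal.comap hNnorm _, ?_, ?_⟩
    · constructor
      rw [Subgroup.index_comap_of_surjective _ e.surjective]
      exact hNfi.index_ne_zero
    · intro x hx hx1 z hz
      have hfin : IsOfFinOrder x := hellip x ⟨z, hz⟩
      have hfin' : IsOfFinOrder (e x) := e.toMonoidHom.isOfFinOrder hfin
      have : e x = 1 := hNtf (e x) hx hfin'
      exact hx1 (by simpa using e.injective (by rw [this, map_one]))
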